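/- Let X_λ be the vector field on ℝ³ given by X_λ(x,y,z) = (2xz + λy, 2yz − λx, 1 − x² − y² + z²). Then the function c(x,y,z) = (x² + y²)/(x² + y² + z² + 1)² is a first integral of X_λ, i.e. the directional derivative of c along X_λ vanishes identically. -/

import Mathlib

/-!
With `u = x² + y²` and `v = x² + y² + z² + 1`, both polynomials are Darboux polynomials of
`X_λ`: `X_λ u = 4z u` and `X_λ v = 2z v` (the rotational part `λ(y, -x)` of the field kills
both). Since the cofactor of `u` is twice that of `v`, the quotient rule gives `X_λ (u / v²) = 0`.
Directional derivatives are handled as line derivatives, where the one-variable quotient rule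
applies.
-/

section Darboux

variable {E : Type*} [NormedAddCommGroup E] [NormedSpace ℝ E] {f g : E → ℝ} {p w : E} {k : ℝ}

theorem HasLineDerivAt.div_pow_of_cofactor (n : ℕ) (hf : HasLineDerivAt ℝ f (n * k * f p) p w)
    (hg : HasLineDerivAt ℝ g (k * g p) p w) (hg0 : g p ≠ 0) :
    HasLineDerivAt ℝ (fun q => f q / g q ^ n) 0 p w := by
  unfold HasLineDerivAt at *
  refine (hf.fun_div (hg.fun_pow n) (by simpa using pow_ne_zero n hg0)).congr_deriv ?_
  cases n with
  | zero => simp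
  | succ n =>
    simp only [zero_smul, add_zero, add_tsub_cancel_right]
    field_simp
    ring

end Darboux

section Coordinates

variable (p w : ℝ × ℝ × ℝ)

theorem hasFDerivAt_coord_x :
    HasFDerivAt (fun q : ℝ × ℝ × ℝ => q.1) (ContinuousLinearMap.fst ℝ ℝ (ℝ × ℝ)) p :=
  hasFDerivAt_fst

theorem hasFDerivAt_coord_y :
    HasFDerivAt (fun q : ℝ × ℝ × ℝ => q.2.1)
      ((ContinuousLinearMap.fst ℝ ℝ ℝ).comp (ContinuousLinearMap.snd ℝ ℝ (ℝ × ℝ))) p :=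
  hasFDerivAt_snd.fst

theorem hasFDerivAt_coord_z :
    HasFDerivAt (fun q : ℝ × ℝ × ℝ => q.2.2)
      ((ContinuousLinearMap.snd ℝ ℝ ℝ).comp (ContinuousLinearMap.snd ℝ ℝ (ℝ × ℝ))) p :=
  hasFDerivAt_snd.snd

theorem hasLineDerivAt_sq_add_sq :
    HasLineDerivAt ℝ (fun q : ℝ × ℝ × ℝ => q.1 ^ 2 + q.2.1 ^ 2)
      (2 * p.1 * w.1 + 2 * p.2.1 * w.2.1) p w := by
  have h := (((hasFDerivAt_coord_x p).pow 2).add ((hasFDerivAt_coord_y p).pow 2)).hasLineDerivAt w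
  simp only [Nat.add_one_sub_one, pow_one, nsmul_eq_mul, Nat.cast_ofNat,
    add_apply, smul_apply, ContinuousLinearMap.coe_fst',
    smul_eq_mul, ContinuousLinearMap.comp_apply, ContinuousLinearMap.coe_snd'] at h
  exact h

theorem hasLineDerivAt_sq_add_sq_add_sq_add_one :
    HasLineDerivAt ℝ (fun q : ℝ × ℝ × ℝ => q.1 ^ 2 + q.2.1 ^ 2 + q.2.2 ^ 2 + 1)
      (2 * p.1 * w.1 + 2 * p.2.1 * w.2.1 + 2 * p.2.2 * w.2.2) p w := by
  have h := ((((hasFDerivAt_coord_x p).pow 2).add ((hasFDerivAt_coord_y p).pow 2)).add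
    ((hasFDerivAt_coord_z p).pow 2) |>.add_const 1).hasLineDerivAt w
  simp only [Nat.add_one_sub_one, pow_one, nsmul_eq_mul, Nat.cast_ofNat,
    add_apply, smul_apply, ContinuousLinearMap.coe_fst',
    smul_eq_mul, ContinuousLinearMap.comp_apply, ContinuousLinearMap.coe_snd'] at h
  exact h

end Coordinates

section VectorField

def vectorField (lam : ℝ) (q : ℝ × ℝ × ℝ) : ℝ × ℝ × ℝ :=
  (2 * q.1 * q.2.2 + lam * q.2.1, 2 * q.2.1 * q.2.2 - lam * q.1,
    1 - q.1 ^ 2 - q.2.1 ^ 2 + q.2.2 ^ 2)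

variable (lam : ℝ) (p : ℝ × ℝ × ℝ)

theorem hasLineDerivAt_sq_add_sq_vectorField :
    HasLineDerivAt ℝ (fun q : ℝ × ℝ × ℝ => q.1 ^ 2 + q.2.1 ^ 2)
      ((2 : ℕ) * (2 * p.2.2) * (p.1 ^ 2 + p.2.1 ^ 2)) p (vectorField lam p) := by
  convert hasLineDerivAt_sq_add_sq p (vectorField lam p) using 1
  simp only [vectorField, Nat.cast_ofNat]
  ring

theorem hasLineDerivAt_sq_add_sq_add_sq_add_one_vectorField :
    HasLineDerivAt ℝ (fun q : ℝ × ℝ × ℝ => q.1 ^ 2 + q.2.1 ^ 2 + q.2.2 ^ 2 + 1)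
      (2 * p.2.2 * (p.1 ^ 2 + p.2.1 ^ 2 + p.2.2 ^ 2 + 1)) p (vectorField lam p) := by
  convert hasLineDerivAt_sq_add_sq_add_sq_add_one p (vectorField lam p) using 1
  simp only [vectorField]
  ring

end VectorField

/-- The function `c(x,y,z) = (x²+y²)/(x²+y²+z²+1)²` is a first integral of the
vector field `X_λ(x,y,z) = (2xz+λy, 2yz−λx, 1−x²−y²+z²)` on ℝ³. -/
theorem stmt_0 (lam : ℝ) (p : ℝ × ℝ × ℝ) :
    fderiv ℝ (fun q : ℝ × ℝ × ℝ =>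
        (q.1 ^ 2 + q.2.1 ^ 2) / (q.1 ^ 2 + q.2.1 ^ 2 + q.2.2 ^ 2 + 1) ^ 2) p
      (2 * p.1 * p.2.2 + lam * p.2.1,
       2 * p.2.1 * p.2.2 - lam * p.1,
       1 - p.1 ^ 2 - p.2.1 ^ 2 + p.2.2 ^ 2) = 0 := by
  have hdiff : DifferentiableAt ℝ (fun q : ℝ × ℝ × ℝ =>
      (q.1 ^ 2 + q.2.1 ^ 2) / (q.1 ^ 2 + q.2.1 ^ 2 + q.2.2 ^ 2 + 1) ^ 2) p := by
    fun_prop (disch := positivity)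
  rw [← hdiff.lineDeriv_eq_fderiv]
  exact ((hasLineDerivAt_sq_add_sq_vectorField lam p).div_pow_of_cofactor 2
    (hasLineDerivAt_sq_add_sq_add_sq_add_one_vectorField lam p) (by positivity)).lineDeriv
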